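/- arXiv:1001.1829 — 3 statements merged into one kernel-verified Lean document; each statement's English description precedes it below -/
import Mathlib

section
/- Let G, G₁ and F̂ be as in the convex-hull setup (F̂ the slope of the lower convex hull C of the curve t ↦ (G(t), G₁(t)), satisfying G₁(x) ≥ ∫_{[0,x]} F̂ dG for all x with equality at points of increase of F̂). Then for every distribution function F on [0,∞), ∫ log F(t) dG₁(t) ≤ ∫ F̂(t)·log F(t) dG(t), with the convention log 0 = −∞ and 0·(−∞) = 0. -/
/-!
Let `μ = F̂ dG`. Since `G` puts no mass on `(-∞, 0)`, the hull inequality gives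
`μ (-∞, x] ≤ G₁ (-∞, x]` for every `x`. The function `-log F` is antitone, so each of its
superlevel sets is a lower set of `ℝ`: empty, all of `ℝ`, `(-∞, a]` or `(-∞, a)`. The last two are
increasing unions of intervals `(-∞, x]`, so every superlevel set has no more `μ`-mass than
`G₁`-mass, and the layer-cake formula turns this into `∫ -log F dμ ≤ ∫ -log F dG₁`.
-/

open MeasureTheory

/-- `nlog x = −log x` valued in `[0,∞]`, with `nlog 0 = ∞`. -/
noncomputable def nlog (x : ℝ) : ENNReal :=
  if x = 0 then ⊤ else ENNReal.ofReal (-Real.log x)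

open Set Filter Topology
open scoped ENNReal

theorem IsLowerSet.eq_empty_or_univ_or_Iic_or_Iio {α : Type*} [ConditionallyCompleteLinearOrder α]
    {S : Set α} (hS : IsLowerSet S) :
    S = ∅ ∨ S = univ ∨ S = Iic (sSup S) ∨ S = Iio (sSup S) := by
  rcases S.eq_empty_or_nonempty with hempty | hne
  · exact Or.inl hempty
  by_cases hbdd : BddAbove S
  · have hIio : Iio (sSup S) ⊆ S := fun t ht => by
      obtain ⟨u, hu, htu⟩ := exists_lt_of_lt_csSup hne ht
      exact hS htu.le hu
    simpa [or_assoc] using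
      Or.inr (Or.inr (mem_Iic_Iio_of_subset_of_subset hIio fun t ht => le_csSup hbdd ht))
  · refine Or.inr (Or.inl (eq_univ_of_forall fun t => ?_))
    obtain ⟨u, hu, htu⟩ := not_bddAbove_iff.mp hbdd t
    exact hS htu.le hu

section MeasureIicLe

variable {μ ν : Measure ℝ}

theorem measure_iUnion_Iic_le_of_measure_Iic_le {ι : Type*} [Preorder ι] [IsDirectedOrder ι]
    [(atTop : Filter ι).IsCountablyGenerated] (h : ∀ x, μ (Iic x) ≤ ν (Iic x)) {u : ι → ℝ}
    (hu : Monotone u) : μ (⋃ i, Iic (u i)) ≤ ν (⋃ i, Iic (u i)) := by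
  have hIic : Monotone fun i => Iic (u i) := fun i j hij => Iic_subset_Iic.mpr (hu hij)
  rw [hIic.measure_iUnion, hIic.measure_iUnion]
  exact iSup_mono fun i => h (u i)

theorem IsLowerSet.measure_le_of_measure_Iic_le (h : ∀ x, μ (Iic x) ≤ ν (Iic x)) {S : Set ℝ}
    (hS : IsLowerSet S) : μ S ≤ ν S := by
  obtain rfl | rfl | hSup | hSup := hS.eq_empty_or_univ_or_Iic_or_Iio
  · simp
  · rw [← iUnion_Iic]
    exact measure_iUnion_Iic_le_of_measure_Iic_le h monotone_id
  · exact hSup ▸ h _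
  · obtain ⟨u, hu_mono, hu_lt, hu_lim⟩ := exists_seq_strictMono_tendsto (sSup S)
    rw [hSup, ← iUnion_Iic_eq_Iio_of_lt_of_tendsto hu_lt hu_lim]
    exact measure_iUnion_Iic_le_of_measure_Iic_le h hu_mono.monotone

end MeasureIicLe

section LayerCake

variable {α : Type*} [MeasurableSpace α] {μ ν : Measure α}

theorem lintegral_ofReal_le_of_measure_lt_le {g : α → ℝ} (hg_nonneg : 0 ≤ g) (hg : Measurable g)
    (h : ∀ t > 0, μ {x | t < g x} ≤ ν {x | t < g x}) :
    ∫⁻ x, ENNReal.ofReal (g x) ∂μ ≤ ∫⁻ x, ENNReal.ofReal (g x) ∂ν := by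
  rw [lintegral_eq_lintegral_meas_lt μ (ae_of_all _ hg_nonneg) hg.aemeasurable,
    lintegral_eq_lintegral_meas_lt ν (ae_of_all _ hg_nonneg) hg.aemeasurable]
  exact setLIntegral_mono' measurableSet_Ioi h

theorem lintegral_eq_iSup_lintegral_min_natCast {f : α → ℝ≥0∞} (hf : Measurable f) :
    ∫⁻ x, f x ∂μ = ⨆ n : ℕ, ∫⁻ x, min (f x) n ∂μ := by
  have hsup : ∀ x, f x = ⨆ n : ℕ, min (f x) n := fun x => calc
    f x = f x ⊓ ⨆ n : ℕ, (n : ℝ≥0∞) := by rw [ENNReal.iSup_natCast, inf_top_eq]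
    _ = ⨆ n : ℕ, min (f x) n := inf_iSup_eq _ _
  have hmono : Monotone fun (n : ℕ) x => min (f x) n := fun m n hmn x =>
    min_le_min_left _ (Nat.cast_le.mpr hmn)
  simp_rw [← lintegral_iSup (fun n => hf.min measurable_const) hmono, ← hsup]

theorem lintegral_le_lintegral_of_measure_lt_le {f : α → ℝ≥0∞} (hf : Measurable f)
    (h : ∀ s, μ {x | s < f x} ≤ ν {x | s < f x}) : ∫⁻ x, f x ∂μ ≤ ∫⁻ x, f x ∂ν := by
  -- The layer-cake formula is for real-valued functions, so truncate `f` at each level `n`.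
  rw [lintegral_eq_iSup_lintegral_min_natCast hf, lintegral_eq_iSup_lintegral_min_natCast hf]
  refine iSup_mono fun n => ?_
  have hfin : ∀ x, min (f x) n ≠ ∞ := fun x =>
    ne_top_of_le_ne_top (ENNReal.natCast_ne_top n) (min_le_right _ _)
  have hlevel : ∀ t > (0 : ℝ), {x | t < (min (f x) n).toReal} =
      if ENNReal.ofReal t < n then {x | ENNReal.ofReal t < f x} else ∅ := fun t ht => by
    ext x
    rw [mem_ofPred_eq, ← ENNReal.ofReal_lt_iff_lt_toReal ht.le (hfin x), lt_min_iff]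
    split_ifs with htn <;> simp [htn]
  have hlevel_le : ∀ t > (0 : ℝ), μ {x | t < (min (f x) n).toReal} ≤
      ν {x | t < (min (f x) n).toReal} := fun t ht => by
    rw [hlevel t ht]
    split_ifs
    · exact h _
    · simp
  simpa only [ENNReal.ofReal_toReal (hfin _)] using
    lintegral_ofReal_le_of_measure_lt_le (fun x => ENNReal.toReal_nonneg)
      (hf.min measurable_const).ennreal_toReal hlevel_le

end LayerCake

theorem Antitone.lintegral_le_lintegral_of_measure_Iic_le {μ ν : Measure ℝ}
    (h : ∀ x, μ (Iic x) ≤ ν (Iic x)) {f : ℝ → ℝ≥0∞} (hf : Antitone f) :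
    ∫⁻ x, f x ∂μ ≤ ∫⁻ x, f x ∂ν :=
  lintegral_le_lintegral_of_measure_lt_le hf.measurable fun _ =>
    IsLowerSet.measure_le_of_measure_Iic_le h fun _ _ hba hb => hb.trans_le (hf hba)

theorem measure_Iic_le_of_measure_Icc_le {μ ν : Measure ℝ} {a : ℝ} (hμ : μ (Iio a) = 0)
    (h : ∀ x, a ≤ x → μ (Icc a x) ≤ ν (Icc a x)) (x : ℝ) : μ (Iic x) ≤ ν (Iic x) := by
  rcases le_or_gt a x with hax | hxa
  · calc μ (Iic x) = μ (Iio a ∪ Icc a x) := by rw [Iio_union_Icc_eq_Iic hax]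
      _ ≤ μ (Icc a x) := (measure_union_le _ _).trans_eq (by rw [hμ, zero_add])
      _ ≤ ν (Icc a x) := h x hax
      _ ≤ ν (Iic x) := measure_mono Icc_subset_Iic_self
  · exact (measure_mono_null (Iic_subset_Iio.mpr hxa) hμ).trans_le zero_le

theorem StieltjesFunction.measure_Iio_eq_zero_of_forall_le_eq (f : StieltjesFunction ℝ) {a : ℝ}
    (hf : ∀ u ≤ a, f u = f a) : f.measure (Iio a) = 0 := by
  have hlim : Tendsto f atBot (𝓝 (f a)) :=
    tendsto_const_nhds.congr' ((eventually_le_atBot a).mono fun u hu => (hf u hu).symm)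
  exact measure_mono_null Iio_subset_Iic_self (by simp [f.measure_Iic hlim])

theorem antitoneOn_nlog : AntitoneOn nlog (Ici 0) := by
  intro x hx y _ hxy
  rcases (mem_Ici.mp hx).eq_or_lt with rfl | hx0
  · simp [nlog]
  · rw [nlog, nlog, if_neg (hx0.trans_le hxy).ne', if_neg hx0.ne']
    exact ENNReal.ofReal_le_ofReal (neg_le_neg (Real.log_le_log hx0 hxy))

theorem msle_log_inequality_general
    (G G₁ : StieltjesFunction ℝ) (Fhat F : ℝ → ℝ)
    (hFhat_mono : Monotone Fhat)
    (hF_mono : Monotone F) (hF_range : ∀ t, F t ∈ Set.Icc (0:ℝ) 1)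
    (hGneg : ∀ u ≤ (0:ℝ), G u = G 0)
    (hhull : ∀ x, 0 ≤ x →
      ∫⁻ u in Set.Icc (0:ℝ) x, ENNReal.ofReal (Fhat u) ∂G.measure ≤
        G₁.measure (Set.Icc 0 x)) :
    ∫⁻ t, ENNReal.ofReal (Fhat t) * nlog (F t) ∂G.measure ≤
      ∫⁻ t, nlog (F t) ∂G₁.measure := by
  set μ := G.measure.withDensity fun t => ENNReal.ofReal (Fhat t)
  have hμ_Iio : μ (Iio 0) = 0 :=
    withDensity_absolutelyContinuous _ _ (G.measure_Iio_eq_zero_of_forall_le_eq hGneg)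
  have hμ_Icc : ∀ x, 0 ≤ x → μ (Icc 0 x) ≤ G₁.measure (Icc 0 x) := fun x hx =>
    (withDensity_apply _ measurableSet_Icc).trans_le (hhull x hx)
  have hnlogF : Antitone fun t => nlog (F t) := fun s t hst =>
    antitoneOn_nlog (hF_range s).1 (hF_range t).1 (hF_mono hst)
  calc ∫⁻ t, ENNReal.ofReal (Fhat t) * nlog (F t) ∂G.measure = ∫⁻ t, nlog (F t) ∂μ :=
        (lintegral_withDensity_eq_lintegral_mul _ hFhat_mono.measurable.ennreal_ofReal
          hnlogF.measurable).symm
    _ ≤ ∫⁻ t, nlog (F t) ∂G₁.measure :=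
        hnlogF.lintegral_le_lintegral_of_measure_Iic_le
          (measure_Iic_le_of_measure_Icc_le hμ_Iio hμ_Icc)

/-- First inequality of Lemma 3.2: with `F̂` the slope of the lower convex hull
of `t ↦ (G(t), G₁(t))` (so that `∫_{[0,x]} F̂ dG ≤ G₁-measure of [0,x]` with
equality at points of increase of `F̂`), for every distribution function `F`,
`∫ log F dG₁ ≤ ∫ F̂ · log F dG` (conventions `log 0 = −∞`, `0·(−∞) = 0`);
equivalently, stated for `−log F ∈ [0,∞]`:
`∫ F̂ · (−log F) dG ≤ ∫ (−log F) dG₁`. -/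
theorem msle_log_inequality
    (G G₁ : StieltjesFunction ℝ) (Fhat F : ℝ → ℝ)
    (hFhat_mono : Monotone Fhat) (hFhat_range : ∀ t, Fhat t ∈ Set.Icc (0:ℝ) 1)
    (hF_mono : Monotone F) (hF_range : ∀ t, F t ∈ Set.Icc (0:ℝ) 1)
    (hGneg : ∀ u ≤ (0:ℝ), G u = G 0) (hG₁neg : ∀ u ≤ (0:ℝ), G₁ u = G₁ 0)
    (hhull : ∀ x, 0 ≤ x →
      ∫⁻ u in Set.Icc (0:ℝ) x, ENNReal.ofReal (Fhat u) ∂G.measure ≤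
        G₁.measure (Set.Icc 0 x))
    (hhull_eq : ∀ x, 0 ≤ x → (∀ ε > (0:ℝ), Fhat (x - ε) < Fhat (x + ε)) →
      ∫⁻ u in Set.Icc (0:ℝ) x, ENNReal.ofReal (Fhat u) ∂G.measure =
        G₁.measure (Set.Icc 0 x)) :
    ∫⁻ t, ENNReal.ofReal (Fhat t) * nlog (F t) ∂G.measure ≤
      ∫⁻ t, nlog (F t) ∂G₁.measure :=
  msle_log_inequality_general G G₁ Fhat F hFhat_mono hF_mono hF_range hGneg hhull
end

section
/- Let F₀ be continuously differentiable with F₀'(s) = f₀(s) ≥ f₀(t)/2 > 0 for all s in an interval I = [t−h, t+h]. Let F̂ be a nondecreasing step function constant on intervals J_i = [τ_i, τ_{i+1}), and define Â(u) for u ∈ J_i by: Â(u) = τ_i if F₀ > F̂(τ_i) on all of J_i; Â(u) = s if F̂(s) = F₀(s) for some s ∈ J_i; and Â(u) = τ_{i+1} if F₀ < F̂(τ_i) on all of J_i. Then for every u ∈ I with u ∈ J_i, |F̂(u) − F₀(u)| ≥ (f₀(t)/2)·|u − Â(u)|. -/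
/-- Key pointwise bound in the proof of Lemma A.4: if `F₀` has derivative
`f₀ ≥ f₀(t)/2 > 0` on `I = [t−h, t+h]`, `F̂` is constant on `J = [τ, τ')`
(with `[τ,τ'] ⊆ I`), and `Â(u) = A` is defined via the crossing behaviour of
`F₀` and `F̂` on `J`, then `|F̂(u) − F₀(u)| ≥ (f₀(t)/2)·|u − A|` for `u ∈ J`. -/
theorem crossing_point_lower_bound (F₀ f₀ Fhat : ℝ → ℝ) (t h τ τ' A : ℝ)
    (hh : 0 < h) (hττ' : τ < τ')
    (hsub : Set.Icc τ τ' ⊆ Set.Icc (t - h) (t + h))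
    (hderiv : ∀ s ∈ Set.Icc (t - h) (t + h), HasDerivAt F₀ (f₀ s) s)
    (hpos : 0 < f₀ t)
    (hlb : ∀ s ∈ Set.Icc (t - h) (t + h), f₀ t / 2 ≤ f₀ s)
    (hconst : ∀ v ∈ Set.Ico τ τ', Fhat v = Fhat τ)
    (hA : (A = τ ∧ ∀ s ∈ Set.Ico τ τ', Fhat τ < F₀ s) ∨
          (A ∈ Set.Ico τ τ' ∧ Fhat A = F₀ A) ∨
          (A = τ' ∧ ∀ s ∈ Set.Ico τ τ', F₀ s < Fhat τ)) :
    ∀ u ∈ Set.Ico τ τ', f₀ t / 2 * |u - A| ≤ |Fhat u - F₀ u| := by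
  set c : ℝ := f₀ t / 2 with hc
  have hcpos : 0 < c := by positivity
  -- monotonicity of F₀ x - c x on I
  have hd : ∀ x ∈ Set.Icc (t - h) (t + h),
      HasDerivAt (fun x => F₀ x - c * x) (f₀ x - c * 1) x :=
    fun x hx => (hderiv x hx).sub ((hasDerivAt_id x).const_mul c)
  have hmono : MonotoneOn (fun x => F₀ x - c * x) (Set.Icc (t - h) (t + h)) := by
    apply monotoneOn_of_deriv_nonneg (convex_Icc _ _)
    · exact fun x hx => ((hd x hx).continuousAt).continuousWithinAt
    · exact fun x hx => (hd x (interior_subset hx)).differentiableAt.differentiableWithinAt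
    · intro x hx
      have hx' : x ∈ Set.Icc (t - h) (t + h) := interior_subset hx
      rw [(hd x hx').deriv]
      have := hlb x hx'
      linarith
  have key : ∀ a ∈ Set.Icc (t - h) (t + h), ∀ b ∈ Set.Icc (t - h) (t + h),
      a ≤ b → c * (b - a) ≤ F₀ b - F₀ a := by
    intro a ha b hb hab
    have := hmono ha hb hab
    simp only at this
    nlinarith
  intro u hu
  have huI : u ∈ Set.Icc (t - h) (t + h) := hsub ⟨hu.1, hu.2.le⟩
  have hτI : τ ∈ Set.Icc (t - h) (t + h) := hsub ⟨le_refl _, hττ'.le⟩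
  have hτ'I : τ' ∈ Set.Icc (t - h) (t + h) := hsub ⟨hττ'.le, le_refl _⟩
  have hFu : Fhat u = Fhat τ := hconst u hu
  rcases hA with ⟨hAτ, hgt⟩ | ⟨hAmem, hAeq⟩ | ⟨hAτ, hlt⟩
  · -- A = τ, Fhat τ < F₀ on J
    subst hAτ
    have h1 : Fhat A < F₀ A := hgt A ⟨le_refl _, hττ'⟩
    have h2 : c * (u - A) ≤ F₀ u - F₀ A := key A hτI u huI hu.1
    have h3 : Fhat u - F₀ u < 0 := by
      have := hgt u hu; linarith [hFu]
    rw [abs_of_nonneg (by linarith [hu.1] : (0:ℝ) ≤ u - A),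
        abs_of_neg h3]
    linarith
  · -- crossing point
    have hAI : A ∈ Set.Icc (t - h) (t + h) := hsub ⟨hAmem.1, hAmem.2.le⟩
    have hFA : Fhat A = Fhat τ := hconst A hAmem
    have hEq : Fhat u = F₀ A := by rw [hFu, ← hFA, hAeq]
    rcases le_total u A with hle | hle
    · have h2 : c * (A - u) ≤ F₀ A - F₀ u := key u huI A hAI hle
      rw [abs_of_nonpos (by linarith : u - A ≤ 0), hEq]
      calc c * -(u - A) = c * (A - u) := by ring
        _ ≤ F₀ A - F₀ u := h2
        _ ≤ |F₀ A - F₀ u| := le_abs_self _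
    · have h2 : c * (u - A) ≤ F₀ u - F₀ A := key A hAI u huI hle
      rw [abs_of_nonneg (by linarith : (0:ℝ) ≤ u - A), hEq]
      calc c * (u - A) ≤ F₀ u - F₀ A := h2
        _ = -(F₀ A - F₀ u) := by ring
        _ ≤ |F₀ A - F₀ u| := neg_le_abs _
  · -- A = τ', F₀ < Fhat τ on J
    subst hAτ
    have hcont : ContinuousAt F₀ A := (hderiv A hτ'I).continuousAt
    have hlim : F₀ A ≤ Fhat τ := by
      have htend : Filter.Tendsto F₀ (nhdsWithin A (Set.Iio A)) (nhds (F₀ A)) :=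
        hcont.continuousWithinAt
      refine le_of_tendsto htend ?_
      filter_upwards [Ioo_mem_nhdsLT_of_mem ⟨hττ', le_refl A⟩] with s hs
      exact (hlt s ⟨hs.1.le, hs.2⟩).le
    have h2 : c * (A - u) ≤ F₀ A - F₀ u := key u huI A hτ'I hu.2.le
    have h3 : 0 < Fhat u - F₀ u := by
      have := hlt u hu; linarith [hFu]
    rw [abs_of_nonpos (by linarith [hu.2] : u - A ≤ 0), abs_of_pos h3]
    linarith
end

section
/- Combining the two previous bounds: under the assumptions that f₀ = F₀' ≥ f₀(t)/2 > 0 on [t−h, t+h], that F̂ is a nondecreasing step function constant on intervals J_i with Â defined as above, and that ψ_{h,t} is Lipschitz with constant c·h^{−2} on [t−h, t+h] and vanishes for |t−u| > h, the piecewise-constant version ψ̄_{h,t}(u) := ψ_{h,t}(Â(u)) satisfies |ψ̄_{h,t}(u) − ψ_{h,t}(u)| ≤ (2c/f₀(t))·h^{−2}·|F̂(u) − F₀(u)|·1_{{|t−u| ≤ h}} for all u. -/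
/-- Inequality (A.16) of Lemma A.4: if `ψ̄(u) = ψ(Â(u))` on the band
`|t−u| ≤ h` and `ψ̄ = ψ` off the band, `ψ` is `c·h⁻²`-Lipschitz, and
`|F̂(u) − F₀(u)| ≥ (f₀(t)/2)|u − Â(u)|` on the band, then
`|ψ̄(u) − ψ(u)| ≤ (2c/f₀(t))·h⁻²·|F̂(u) − F₀(u)|·1_{|t−u| ≤ h}`. -/
theorem piecewise_constant_psi_bound
    (ψ ψbar Fhat F₀ Ahat f₀ : ℝ → ℝ) (t h c : ℝ)
    (hh : 0 < h) (hc : 0 < c) (hf : 0 < f₀ t)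
    (hψbar : ∀ u, |t - u| ≤ h → ψbar u = ψ (Ahat u))
    (hout : ∀ u, h < |t - u| → ψbar u = ψ u)
    (hLip : ∀ u v, |ψ u - ψ v| ≤ c / h ^ 2 * |u - v|)
    (hlow : ∀ u, |t - u| ≤ h → f₀ t / 2 * |u - Ahat u| ≤ |Fhat u - F₀ u|) :
    ∀ u, |ψbar u - ψ u| ≤
      2 * c / f₀ t / h ^ 2 * |Fhat u - F₀ u| * (if |t - u| ≤ h then (1:ℝ) else 0) := by
  intro u
  by_cases hu : |t - u| ≤ h
  · rw [if_pos hu, mul_one, hψbar u hu]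
    calc |ψ (Ahat u) - ψ u| ≤ c / h ^ 2 * |Ahat u - u| := hLip _ _
      _ ≤ c / h ^ 2 * (2 / f₀ t * |Fhat u - F₀ u|) := by
          apply mul_le_mul_of_nonneg_left _ (by positivity)
          rw [abs_sub_comm]
          have h1 := hlow u hu
          have h2 : (0:ℝ) < f₀ t := hf
          rw [div_mul_eq_mul_div, le_div_iff₀ h2]
          nlinarith
      _ = 2 * c / f₀ t / h ^ 2 * |Fhat u - F₀ u| := by ring
  · rw [if_neg hu, mul_zero, hout u (lt_of_not_ge hu), sub_self, abs_zero]
end
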